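/- With notation as in the affinity-distance characterization, the maximum of Tr(√ρ √σ) over block-diagonal states σ = Σ_m P_m σ P_m equals (Σ_m Tr[(P_m √ρ P_m)^2])^{1/2}, and it is attained at σ_ρ = ⊕_m (P_m √ρ P_m)^2 / Σ_n Tr[(P_n √ρ P_n)^2]. -/

import Mathlib

/-!
The pinching `pinch P X = ∑ m, P m * X * P m` is self-adjoint for the trace pairing, and a
block-diagonal `σ` commutes with every `P m`, hence so does `√σ`, which is therefore
block-diagonal too. Thus `Tr(√ρ √σ) = Tr(pinch P √ρ · √σ)`, and Cauchy–Schwarz for the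
Hilbert–Schmidt inner product bounds this by
`‖pinch P √ρ‖₂ ‖√σ‖₂ = ‖pinch P √ρ‖₂ (Tr σ)^{1/2}`.
Equality holds when `√σ` is proportional to `pinch P √ρ`, i.e. for `σ_ρ`.
-/

open scoped ComplexOrder

open Classical in
/-- The positive semidefinite square root of a matrix (zero if not psd). -/
noncomputable def msqrt {d : ℕ} (ρ : Matrix (Fin d) (Fin d) ℂ) : Matrix (Fin d) (Fin d) ℂ :=
  if h : ρ.PosSemidef then
    (h.1.eigenvectorUnitary : Matrix (Fin d) (Fin d) ℂ) *
      Matrix.diagonal ((↑) ∘ Real.sqrt ∘ h.1.eigenvalues) *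
      (star h.1.eigenvectorUnitary : Matrix (Fin d) (Fin d) ℂ)
  else 0

open Matrix

namespace Matrix

theorem re_trace_conjTranspose_mul_le {m n 𝕜 : Type*} [Fintype m] [Fintype n] [RCLike 𝕜]
    (A B : Matrix m n 𝕜) :
    RCLike.re (Aᴴ * B).trace ≤
      √(RCLike.re (Aᴴ * A).trace) * √(RCLike.re (Bᴴ * B).trace) := by
  have h (X Y : Matrix m n 𝕜) :
      inner 𝕜 (WithLp.toLp 2 X.vec) (WithLp.toLp 2 Y.vec) = (Xᴴ * Y).trace := by
    rw [EuclideanSpace.inner_toLp_toLp, dotProduct_comm, star_vec_dotProduct_vec]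
  simpa only [norm_eq_sqrt_re_inner (𝕜 := 𝕜), h] using
    re_inner_le_norm (𝕜 := 𝕜) (WithLp.toLp 2 A.vec) (WithLp.toLp 2 B.vec)

end Matrix

section Msqrt

variable {d : ℕ}

open scoped MatrixOrder

theorem msqrt_eq_cfcSqrt {ρ : Matrix (Fin d) (Fin d) ℂ} (h : ρ.PosSemidef) :
    msqrt ρ = CFC.sqrt ρ := by
  rw [CFC.sqrt_eq_cfc, cfc_nnreal_eq_real _ ρ, h.1.cfc_eq, msqrt, dif_pos h]
  simp only [Matrix.IsHermitian.cfc, Real.coe_sqrt, Real.coe_toNNReal']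
  rw [Unitary.conjStarAlgAut_apply]
  congr 3
  funext i
  simp [h.eigenvalues_nonneg i]

theorem posSemidef_msqrt (ρ : Matrix (Fin d) (Fin d) ℂ) : (msqrt ρ).PosSemidef := by
  by_cases h : ρ.PosSemidef
  · rw [msqrt_eq_cfcSqrt h, ← nonneg_iff_posSemidef]
    exact CFC.sqrt_nonneg ρ
  · rw [msqrt, dif_neg h]
    exact .zero

theorem msqrt_mul_self {ρ : Matrix (Fin d) (Fin d) ℂ} (h : ρ.PosSemidef) :
    msqrt ρ * msqrt ρ = ρ := by
  rw [msqrt_eq_cfcSqrt h]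
  exact CFC.sqrt_mul_sqrt_self ρ h.nonneg

theorem msqrt_sq {X : Matrix (Fin d) (Fin d) ℂ} (hX : X.PosSemidef) : msqrt (X ^ 2) = X := by
  rw [msqrt_eq_cfcSqrt (hX.pow 2)]
  exact CFC.sqrt_sq X hX.nonneg

theorem Commute.msqrt {ρ B : Matrix (Fin d) (Fin d) ℂ} (h : Commute ρ B) :
    Commute (msqrt ρ) B := by
  by_cases hρ : ρ.PosSemidef
  · rw [msqrt_eq_cfcSqrt hρ, CFC.sqrt]
    exact h.cfcₙ_nnreal _
  · rw [_root_.msqrt, dif_neg hρ]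
    exact .zero_left B

end Msqrt

section Pinching

variable {ι R : Type*} [Fintype ι]

def pinch [Mul R] [AddCommMonoid R] (P : ι → R) (a : R) : R := ∑ i, P i * a * P i

variable [Ring R] {P : ι → R}

theorem pinch_eq_self_of_commute (hPi : ∀ i, P i * P i = P i)
    (hPs : ∑ i, P i = 1) {a : R} (ha : ∀ i, Commute a (P i)) :
    pinch P a = a := by
  conv_rhs => rw [← one_mul a, ← hPs, Finset.sum_mul]
  exact Finset.sum_congr rfl fun i _ => by rw [mul_assoc, (ha i).eq, ← mul_assoc, hPi]

theorem mul_pinch (hPi : ∀ i, P i * P i = P i) (hPo : ∀ i j, i ≠ j → P i * P j = 0)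
    (a : R) (i : ι) : P i * pinch P a = P i * a * P i := by
  rw [pinch, Finset.mul_sum, Finset.sum_eq_single i]
  · rw [← mul_assoc, ← mul_assoc, hPi]
  · intro j _ hj
    rw [← mul_assoc, ← mul_assoc, hPo i j (Ne.symm hj), zero_mul, zero_mul]
  · simp

theorem pinch_mul (hPi : ∀ i, P i * P i = P i) (hPo : ∀ i j, i ≠ j → P i * P j = 0)
    (a : R) (i : ι) : pinch P a * P i = P i * a * P i := by
  rw [pinch, Finset.sum_mul, Finset.sum_eq_single i]
  · rw [mul_assoc, hPi]
  · intro j _ hj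
    rw [mul_assoc, hPo j i hj, mul_zero]
  · simp

theorem commute_pinch (hPi : ∀ i, P i * P i = P i) (hPo : ∀ i j, i ≠ j → P i * P j = 0)
    (a : R) (i : ι) : Commute (pinch P a) (P i) :=
  (pinch_mul hPi hPo a i).trans (mul_pinch hPi hPo a i).symm

theorem pinch_pinch (hPi : ∀ i, P i * P i = P i) (hPo : ∀ i j, i ≠ j → P i * P j = 0)
    (a : R) : pinch P (pinch P a) = pinch P a :=
  Finset.sum_congr rfl fun i _ => by rw [mul_pinch hPi hPo, mul_assoc, hPi]

theorem pinch_sq (hPi : ∀ i, P i * P i = P i) (hPo : ∀ i j, i ≠ j → P i * P j = 0)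
    (a : R) : pinch P a ^ 2 = ∑ i, (P i * a * P i) ^ 2 := by
  rw [sq]
  nth_rw 2 [pinch]
  rw [Finset.mul_sum]
  refine Finset.sum_congr rfl fun i _ => ?_
  rw [← mul_assoc, ← mul_assoc, pinch_mul hPi hPo, sq,
    show P i * a * P i * (P i * a * P i) = P i * a * (P i * P i) * a * P i by noncomm_ring, hPi]

end Pinching

namespace Matrix

variable {ι n R : Type*} [Fintype ι] [Fintype n]

theorem trace_mul_pinch [CommSemiring R] (P : ι → Matrix n n R) (A X : Matrix n n R) :
    (A * pinch P X).trace = (pinch P A * X).trace := by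
  simp only [pinch, Matrix.mul_sum, Matrix.sum_mul, trace_sum]
  refine Finset.sum_congr rfl fun i _ => ?_
  rw [← Matrix.mul_assoc, ← Matrix.mul_assoc, trace_mul_comm, ← Matrix.mul_assoc,
    ← Matrix.mul_assoc]

theorem trace_mul_pinch_self [DecidableEq n] [CommRing R] {P : ι → Matrix n n R}
    (hPi : ∀ i, P i * P i = P i) (hPo : ∀ i j, i ≠ j → P i * P j = 0) (A : Matrix n n R) :
    (A * pinch P A).trace = (pinch P A ^ 2).trace := by
  rw [← pinch_pinch hPi hPo A, trace_mul_pinch, pinch_pinch hPi hPo, sq]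

theorem IsHermitian.pinch [CommRing R] [StarRing R] {P : ι → Matrix n n R}
    (hP : ∀ i, (P i).IsHermitian) {A : Matrix n n R} (hA : A.IsHermitian) :
    (pinch P A).IsHermitian := by
  simp [IsHermitian, _root_.pinch, conjTranspose_sum, hA.eq, (hP _).eq, Matrix.mul_assoc]

theorem PosSemidef.pinch [CommRing R] [PartialOrder R] [StarRing R] [StarOrderedRing R]
    {P : ι → Matrix n n R} (hP : ∀ i, (P i).IsHermitian) {A : Matrix n n R}
    (hA : A.PosSemidef) : (pinch P A).PosSemidef :=
  posSemidef_sum _ fun i _ => by simpa [(hP i).eq] using hA.conjTranspose_mul_mul_same (P i)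

end Matrix

section BlockDiagonal

variable {ι : Type*} [Fintype ι] {d : ℕ} {P : ι → Matrix (Fin d) (Fin d) ℂ}

theorem pinch_msqrt (hPi : ∀ i, P i * P i = P i) (hPo : ∀ i j, i ≠ j → P i * P j = 0)
    (hPs : ∑ i, P i = 1) {σ : Matrix (Fin d) (Fin d) ℂ} (hσ : pinch P σ = σ) :
    pinch P (msqrt σ) = msqrt σ :=
  pinch_eq_self_of_commute hPi hPs fun i => (hσ ▸ commute_pinch hPi hPo σ i).msqrt

theorem re_trace_mul_msqrt_le (hPh : ∀ i, (P i).IsHermitian) (hPi : ∀ i, P i * P i = P i)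
    (hPo : ∀ i j, i ≠ j → P i * P j = 0) (hPs : ∑ i, P i = 1)
    {A σ : Matrix (Fin d) (Fin d) ℂ} (hA : A.IsHermitian) (hσ : σ.PosSemidef)
    (hσtr : σ.trace = 1) (hσb : pinch P σ = σ) :
    (A * msqrt σ).trace.re ≤ √(pinch P A ^ 2).trace.re := by
  have hB := hA.pinch hPh
  have hS := (posSemidef_msqrt σ).1
  calc (A * msqrt σ).trace.re = ((pinch P A)ᴴ * msqrt σ).trace.re := by
        conv_lhs => rw [← pinch_msqrt hPi hPo hPs hσb]
        rw [trace_mul_pinch, hB.eq]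
    _ ≤ √((pinch P A)ᴴ * pinch P A).trace.re * √((msqrt σ)ᴴ * msqrt σ).trace.re := by
        simpa only [RCLike.re_to_complex] using
          re_trace_conjTranspose_mul_le (pinch P A) (msqrt σ)
    _ = √(pinch P A ^ 2).trace.re := by
        rw [hB.eq, hS.eq, msqrt_mul_self hσ, hσtr, ← sq]
        simp

theorem normalized_sq_pinch_spec (hPh : ∀ i, (P i).IsHermitian) (hPi : ∀ i, P i * P i = P i)
    (hPo : ∀ i j, i ≠ j → P i * P j = 0) (hPs : ∑ i, P i = 1)
    {A : Matrix (Fin d) (Fin d) ℂ} (hA : A.PosSemidef) (hs : 0 < (pinch P A ^ 2).trace.re) :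
    let σ := (((pinch P A ^ 2).trace.re : ℝ) : ℂ)⁻¹ • pinch P A ^ 2
    σ.PosSemidef ∧ σ.trace = 1 ∧ pinch P σ = σ ∧
      (A * msqrt σ).trace.re = √(pinch P A ^ 2).trace.re := by
  set B := pinch P A
  set s := (B ^ 2).trace.re
  intro σ
  have hB : B.PosSemidef := hA.pinch hPh
  have htr : (B ^ 2).trace = s := by
    simpa using Complex.eq_re_of_ofReal_le (r := 0) (by simpa using (hB.pow 2).trace_nonneg)
  set X := (((√s)⁻¹ : ℝ) : ℂ) • B
  have hX : X.PosSemidef := hB.smul (Complex.zero_le_real.mpr (by positivity))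
  have hσX : σ = X ^ 2 := by
    rw [smul_pow, ← Complex.ofReal_pow, inv_pow, Real.sq_sqrt hs.le, Complex.ofReal_inv]
  refine ⟨hσX ▸ hX.pow 2, ?_, ?_, ?_⟩
  · rw [trace_smul, htr, smul_eq_mul, inv_mul_cancel₀ (by exact_mod_cast hs.ne')]
  · exact pinch_eq_self_of_commute hPi hPs fun i =>
      ((commute_pinch hPi hPo A i).pow_left 2).smul_left _
  · rw [hσX, msqrt_sq hX, Matrix.mul_smul, trace_smul, trace_mul_pinch_self hPi hPo, htr,
      smul_eq_mul, ← Complex.ofReal_mul, Complex.ofReal_re, inv_mul_eq_div, Real.div_sqrt]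

end BlockDiagonal

theorem max_trace_sqrt_mul_sqrt_general {d M : ℕ}
    (P : Fin M → Matrix (Fin d) (Fin d) ℂ)
    (hPh : ∀ m, (P m).IsHermitian) (hPi : ∀ m, P m * P m = P m)
    (hPo : ∀ m m', m ≠ m' → P m * P m' = 0) (hPs : ∑ m, P m = 1)
    (ρ : Matrix (Fin d) (Fin d) ℂ)
    (hs : 0 < ∑ n, ((P n * msqrt ρ * P n) ^ 2).trace.re) :
    IsGreatest {x : ℝ | ∃ σ : Matrix (Fin d) (Fin d) ℂ, σ.PosSemidef ∧ σ.trace = 1 ∧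
        σ = ∑ m, P m * σ * P m ∧ x = (msqrt ρ * msqrt σ).trace.re}
      (Real.sqrt (∑ m, ((P m * msqrt ρ * P m) ^ 2).trace.re)) ∧
    (let σρ : Matrix (Fin d) (Fin d) ℂ :=
        ((∑ n, ((P n * msqrt ρ * P n) ^ 2).trace.re : ℝ) : ℂ)⁻¹ •
          ∑ m, (P m * msqrt ρ * P m) ^ 2
     σρ.PosSemidef ∧ σρ.trace = 1 ∧ σρ = ∑ m, P m * σρ * P m ∧
      (msqrt ρ * msqrt σρ).trace.re =
        Real.sqrt (∑ m, ((P m * msqrt ρ * P m) ^ 2).trace.re)) := by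
  have hA := posSemidef_msqrt ρ
  have hsq : ∑ m, (P m * msqrt ρ * P m) ^ 2 = pinch P (msqrt ρ) ^ 2 := (pinch_sq hPi hPo _).symm
  have hsum : ∑ m, ((P m * msqrt ρ * P m) ^ 2).trace.re = (pinch P (msqrt ρ) ^ 2).trace.re := by
    rw [← Complex.re_sum, ← trace_sum, hsq]
  rw [hsum] at hs
  rw [hsum, hsq]
  obtain ⟨hσρ, hσρtr, hσρb, hval⟩ := normalized_sq_pinch_spec hPh hPi hPo hPs hA hs
  refine ⟨⟨⟨_, hσρ, hσρtr, hσρb.symm, hval.symm⟩, ?_⟩,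
    hσρ, hσρtr, hσρb.symm, hval⟩
  rintro x ⟨σ, hσ, hσtr, hσb, rfl⟩
  exact re_trace_mul_msqrt_le hPh hPi hPo hPs hA.1 hσ hσtr hσb.symm

/-- The maximum of `Tr(√ρ√σ)` over block-diagonal states equals
`(Σ_m Tr[(P_m √ρ P_m)²])^{1/2}`, attained at
`σ_ρ = ⊕_m (P_m √ρ P_m)² / Σ_n Tr[(P_n √ρ P_n)²]`. -/
theorem max_trace_sqrt_mul_sqrt {d M : ℕ}
    (P : Fin M → Matrix (Fin d) (Fin d) ℂ)
    (hPh : ∀ m, (P m).IsHermitian) (hPi : ∀ m, P m * P m = P m)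
    (hPo : ∀ m m', m ≠ m' → P m * P m' = 0) (hPs : ∑ m, P m = 1)
    (ρ : Matrix (Fin d) (Fin d) ℂ) (hρ : ρ.PosSemidef) (hρtr : ρ.trace = 1)
    (hs : 0 < ∑ n, ((P n * msqrt ρ * P n) ^ 2).trace.re) :
    IsGreatest {x : ℝ | ∃ σ : Matrix (Fin d) (Fin d) ℂ, σ.PosSemidef ∧ σ.trace = 1 ∧
        σ = ∑ m, P m * σ * P m ∧ x = (msqrt ρ * msqrt σ).trace.re}
      (Real.sqrt (∑ m, ((P m * msqrt ρ * P m) ^ 2).trace.re)) ∧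
    (let σρ : Matrix (Fin d) (Fin d) ℂ :=
        ((∑ n, ((P n * msqrt ρ * P n) ^ 2).trace.re : ℝ) : ℂ)⁻¹ •
          ∑ m, (P m * msqrt ρ * P m) ^ 2
     σρ.PosSemidef ∧ σρ.trace = 1 ∧ σρ = ∑ m, P m * σρ * P m ∧
      (msqrt ρ * msqrt σρ).trace.re =
        Real.sqrt (∑ m, ((P m * msqrt ρ * P m) ^ 2).trace.re)) :=
  max_trace_sqrt_mul_sqrt_general P hPh hPi hPo hPs ρ hs
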